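/- Let H be a central arrangement and F a nonempty flat. Writing S(H) = R[I]/(J_H + Q_I), there is a ring isomorphism R[I]/(J_H + J_{H^F} + Q_I) ≅ S(H^F) ⊗_R S(H_F), obtained from the ideal identity J_H + J_{H^F} + Q_I = J_{H_F} + J_{H^F} + Q_I and the fact that J_{H_F} involves only variables e_i with i ∈ F while J_{H^F} involves only variables with i ∉ F. -/

import Mathlib

/-!
Write `r(s, a) = ∑_{i ∈ s} a_i e_{s∖i}` for the generator of `J_H` attached to a linear relation
`∑_{i ∈ s} a_i x_i = 0` on `V`. Splitting `s = (s∖F) ∪ (s∩F)` gives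
`r(s, a) = e_{s∩F} r(s∖F, a) + e_{s∖F} r(s∩F, a)`. Vectors of `V ∩ {x_F = 0}` vanish on `F`, so
`a` restricted to `s∖F` is a relation of `H^F` and `r(s∖F, a) ∈ J_{H^F}`. If `a` vanishes on
`s∖F`, then `a` is a relation of `H_F` on `s∩F`; otherwise some `a_t ≠ 0` with `t ∈ s∖F`, and
`e_t r(s∖F, a) ≡ a_t e_{s∖F}` modulo `e_t²` puts `e_{s∖F}` into `J_{H^F} + Q`. Hence
`J_H + J_{H^F} + Q_I = (J_{H_F} + Q_F) + (J_{H^F} + Q_{I∖F})`, whose two summands live in the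
disjoint variable sets `F` and `I∖F`; under `ℝ[I] ≅ ℝ[I∖F] ⊗ ℝ[F]` the quotient becomes the
tensor product of the quotients, because the kernel of a tensor product of surjections is
generated by the two kernels.
-/

open MvPolynomial
open scoped TensorProduct
set_option synthInstance.maxHeartbeats 1000000

variable {I : Type} [Fintype I] [DecidableEq I]

noncomputable def coordOn (V : Submodule ℝ (I → ℝ)) (i : I) : V →ₗ[ℝ] ℝ :=
  (LinearMap.proj i).comp V.subtype

/-- The element `∑_{i ∈ I₀} a_i e_{I₀∖{i}}` in variables indexed by `σ`. -/
noncomputable def relElem {σ : Type} [DecidableEq σ] (I₀ : Finset σ) (a : σ → ℝ) :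
    MvPolynomial σ ℝ :=
  ∑ i ∈ I₀, a i • ∏ j ∈ I₀.erase i, (X j : MvPolynomial σ ℝ)

noncomputable def coordKer (F : Finset I) : Submodule ℝ (I → ℝ) :=
  ⨅ i ∈ F, LinearMap.ker (LinearMap.proj (R := ℝ) (φ := fun _ : I => ℝ) i)

noncomputable def JH (V : Submodule ℝ (I → ℝ)) : Ideal (MvPolynomial I ℝ) :=
  Ideal.span {p | ∃ (I₀ : Finset I) (a : I → ℝ),
    (∑ i ∈ I₀, a i • coordOn V i) = 0 ∧ p = relElem I₀ a}

noncomputable def JresI (V : Submodule ℝ (I → ℝ)) (F : Finset I) :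
    Ideal (MvPolynomial I ℝ) :=
  Ideal.span {p | ∃ (I₀ : Finset I) (a : I → ℝ), Disjoint I₀ F ∧
    (∑ i ∈ I₀, a i • coordOn (V ⊓ coordKer F) i) = 0 ∧ p = relElem I₀ a}

/-- `Q_I`: the ideal generated by all squares `e_i²`. -/
noncomputable def Qall : Ideal (MvPolynomial I ℝ) :=
  Ideal.span {p | ∃ i : I, p = (X i : MvPolynomial I ℝ) ^ 2}

/-- `S(H_F)`: the quotient `ℝ[e_i : i ∈ F]/(J_{H_F} + Q_F)` for the (central)
localization of the arrangement at `F`. -/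
noncomputable def SLocIdeal (V : Submodule ℝ (I → ℝ)) (F : Finset I) :
    Ideal (MvPolynomial {i : I // i ∈ F} ℝ) :=
  Ideal.span ({p | ∃ (I₀ : Finset {i : I // i ∈ F}) (a : {i : I // i ∈ F} → ℝ),
      (∑ i ∈ I₀, a i • coordOn V (i : I)) = 0 ∧ p = relElem I₀ a} ∪
    {p | ∃ i : {i : I // i ∈ F}, p = (X i : MvPolynomial {i : I // i ∈ F} ℝ) ^ 2})

/-- `S(H^F)`: the quotient `ℝ[e_i : i ∉ F]/(J_{H^F} + Q_{I∖F})` for the restriction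
of the arrangement to the flat `F`. -/
noncomputable def SResIdeal (V : Submodule ℝ (I → ℝ)) (F : Finset I) :
    Ideal (MvPolynomial {i : I // i ∉ F} ℝ) :=
  Ideal.span ({p | ∃ (I₀ : Finset {i : I // i ∉ F}) (a : {i : I // i ∉ F} → ℝ),
      (∑ i ∈ I₀, a i • coordOn (V ⊓ coordKer F) (i : I)) = 0 ∧ p = relElem I₀ a} ∪
    {p | ∃ i : {i : I // i ∉ F}, p = (X i : MvPolynomial {i : I // i ∉ F} ℝ) ^ 2})

def IsFlatC (V : Submodule ℝ (I → ℝ)) (F : Finset I) : Prop :=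
  ∃ x ∈ V, ∀ i : I, i ∈ F ↔ x i = 0

section RelElem

variable {σ τ : Type} [DecidableEq σ] [DecidableEq τ]

lemma rename_relElem (f : σ ↪ τ) (s : Finset σ) (a : τ → ℝ) :
    rename f (relElem s (a ∘ f)) = relElem (s.map f) a := by
  simp only [relElem, map_sum, map_smul, map_prod, rename_X, Finset.sum_map, Function.comp_apply]
  refine Finset.sum_congr rfl fun i _ => ?_
  rw [← Finset.map_erase, Finset.prod_map]

lemma relElem_union {s t : Finset σ} (h : Disjoint s t) (a : σ → ℝ) :
    relElem (s ∪ t) a = (∏ j ∈ t, X j) * relElem s a + (∏ j ∈ s, X j) * relElem t a := by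
  simp only [relElem, Finset.sum_union h, Finset.mul_sum, mul_smul_comm]
  congr 1 <;> refine Finset.sum_congr rfl fun i hi => ?_
  · rw [Finset.erase_union_distrib, Finset.erase_eq_of_notMem (Finset.disjoint_left.1 h hi),
      Finset.prod_union (Finset.disjoint_of_subset_left (Finset.erase_subset _ _) h), mul_comm]
  · rw [Finset.erase_union_distrib, Finset.erase_eq_of_notMem (Finset.disjoint_right.1 h hi),
      Finset.prod_union (Finset.disjoint_of_subset_right (Finset.erase_subset _ _) h)]

lemma X_mul_relElem {s : Finset σ} {t : σ} (ht : t ∈ s) (a : σ → ℝ) :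
    X t * relElem s a = a t • ∏ j ∈ s, X j
      + X t ^ 2 * ∑ i ∈ s.erase t, a i • ∏ j ∈ (s.erase i).erase t, X j := by
  rw [relElem, ← Finset.add_sum_erase _ _ ht, mul_add, mul_smul_comm,
    Finset.mul_prod_erase _ _ ht, Finset.mul_sum, Finset.mul_sum]
  congr 1
  refine Finset.sum_congr rfl fun i hi => ?_
  have ht' : t ∈ s.erase i := Finset.mem_erase.2 ⟨(Finset.ne_of_mem_erase hi).symm, ht⟩
  rw [← Finset.mul_prod_erase (s.erase i) _ ht', mul_smul_comm, mul_smul_comm, ← mul_assoc,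
    ← pow_two]

lemma prod_X_mem_of_relElem_mem {J : Ideal (MvPolynomial σ ℝ)} {s : Finset σ} {a : σ → ℝ}
    (hrel : relElem s a ∈ J) {t : σ} (ht : t ∈ s) (hat : a t ≠ 0) (hsq : X t ^ 2 ∈ J) :
    ∏ j ∈ s, X j ∈ J := by
  have h : a t • ∏ j ∈ s, (X j : MvPolynomial σ ℝ) ∈ J := by
    have := J.sub_mem (J.mul_mem_left (X t) hrel) (J.mul_mem_right
      (∑ i ∈ s.erase t, a i • ∏ j ∈ (s.erase i).erase t, (X j : MvPolynomial σ ℝ)) hsq)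
    rwa [X_mul_relElem ht, add_sub_cancel_right] at this
  simpa [smul_smul, inv_mul_cancel₀ hat] using J.smul_of_tower_mem (a t)⁻¹ h

lemma relElem_eq_rename_val {p : σ → Prop} [DecidablePred p] {s : Finset σ}
    (hs : ∀ i ∈ s, p i) (a : σ → ℝ) :
    relElem s a = rename Subtype.val (relElem (s.subtype p) (fun i => a i)) := by
  conv_lhs => rw [← Finset.subtype_map_of_mem hs]
  exact (rename_relElem (Function.Embedding.subtype p) _ a).symm

lemma rename_val_relElem {p : σ → Prop} (s : Finset {i // p i}) (a : {i // p i} → ℝ) :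
    rename Subtype.val (relElem s a) =
      relElem (s.map (Function.Embedding.subtype p)) (Function.extend Subtype.val a 0) := by
  rw [← rename_relElem]
  congr
  funext i
  exact (Subtype.val_injective.extend_apply a 0 i).symm

end RelElem

lemma sum_smul_coordOn_apply {ι : Type} (W : Submodule ℝ (ι → ℝ)) (s : Finset ι) (a : ι → ℝ)
    {v : ι → ℝ} (hv : v ∈ W) : (∑ i ∈ s, a i • coordOn W i) ⟨v, hv⟩ = ∑ i ∈ s, a i * v i := by
  simp [coordOn]

section Arrangement

variable {ι : Type} [DecidableEq ι] (V : Submodule ℝ (ι → ℝ)) (F : Finset ι)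

lemma sum_smul_coordOn_sdiff_eq_zero {s : Finset ι} {a : ι → ℝ}
    (hrel : ∑ i ∈ s, a i • coordOn V i = 0) :
    ∑ i ∈ s \ F, a i • coordOn (V ⊓ coordKer F) i = 0 := by
  ext ⟨v, hv⟩
  obtain ⟨hvV, hvF⟩ := Submodule.mem_inf.1 hv
  have hvF : ∀ i ∈ F, v i = 0 := by simpa [coordKer] using hvF
  have hsum := LinearMap.congr_fun hrel ⟨v, hvV⟩
  rw [sum_smul_coordOn_apply, LinearMap.zero_apply] at hsum ⊢
  rwa [Finset.sum_subset Finset.sdiff_subset fun i hi hi' => by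
    rw [hvF i (by simpa [hi] using hi'), mul_zero]]

lemma sum_smul_coordOn_inter_eq_zero {s : Finset ι} {a : ι → ℝ}
    (hrel : ∑ i ∈ s, a i • coordOn V i = 0) (h0 : ∀ i ∈ s \ F, a i = 0) :
    ∑ i ∈ s ∩ F, a i • coordOn V i = 0 := by
  rwa [← Finset.sum_inter_add_sum_sdiff s F, Finset.sum_eq_zero (s := s \ F)
    fun i hi => by rw [h0 i hi, zero_smul], add_zero] at hrel

lemma relElem_mem_map_SLocIdeal {s : Finset ι} (hs : s ⊆ F) {a : ι → ℝ}
    (hrel : ∑ i ∈ s, a i • coordOn V i = 0) :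
    relElem s a ∈ (SLocIdeal V F).map (rename Subtype.val) := by
  rw [relElem_eq_rename_val (p := (· ∈ F)) hs]
  refine Ideal.mem_map_of_mem _ (Ideal.subset_span (Or.inl ⟨_, _, ?_, rfl⟩))
  rwa [Finset.sum_subtype_of_mem (fun i => a i • coordOn V i) hs]

lemma relElem_mem_map_SResIdeal {s : Finset ι} (hs : Disjoint s F) {a : ι → ℝ}
    (hrel : ∑ i ∈ s, a i • coordOn (V ⊓ coordKer F) i = 0) :
    relElem s a ∈ (SResIdeal V F).map (rename Subtype.val) := by
  have hs' : ∀ i ∈ s, i ∉ F := fun i hi => Finset.disjoint_left.1 hs hi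
  rw [relElem_eq_rename_val (p := (· ∉ F)) hs']
  refine Ideal.mem_map_of_mem _ (Ideal.subset_span (Or.inl ⟨_, _, ?_, rfl⟩))
  rwa [Finset.sum_subtype_of_mem (fun i => a i • coordOn (V ⊓ coordKer F) i) hs']

lemma X_sq_mem_map_SLocIdeal {i : ι} (hi : i ∈ F) :
    X i ^ 2 ∈ (SLocIdeal V F).map (rename Subtype.val) := by
  have : (X i : MvPolynomial ι ℝ) ^ 2 = rename Subtype.val (X (⟨i, hi⟩ : {i // i ∈ F}) ^ 2) := by
    simp
  rw [this]
  exact Ideal.mem_map_of_mem _ (Ideal.subset_span (Or.inr ⟨_, rfl⟩))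

lemma X_sq_mem_map_SResIdeal {i : ι} (hi : i ∉ F) :
    X i ^ 2 ∈ (SResIdeal V F).map (rename Subtype.val) := by
  have : (X i : MvPolynomial ι ℝ) ^ 2 = rename Subtype.val (X (⟨i, hi⟩ : {i // i ∉ F}) ^ 2) := by
    simp
  rw [this]
  exact Ideal.mem_map_of_mem _ (Ideal.subset_span (Or.inr ⟨_, rfl⟩))

lemma map_SLocIdeal_le : (SLocIdeal V F).map (rename Subtype.val) ≤ JH V ⊔ Qall := by
  rw [SLocIdeal, Ideal.map_span, Ideal.span_le]
  rintro _ ⟨p, ⟨s, a, hrel, rfl⟩ | ⟨i, rfl⟩, rfl⟩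
  · refine Ideal.mem_sup_left (Ideal.subset_span ⟨_, _, ?_, rename_val_relElem s a⟩)
    simpa [Finset.sum_map, Subtype.val_injective.extend_apply] using hrel
  · exact Ideal.mem_sup_right (Ideal.subset_span ⟨i, by simp⟩)

lemma map_SResIdeal_le : (SResIdeal V F).map (rename Subtype.val) ≤ JresI V F ⊔ Qall := by
  rw [SResIdeal, Ideal.map_span, Ideal.span_le]
  rintro _ ⟨p, ⟨s, a, hrel, rfl⟩ | ⟨i, rfl⟩, rfl⟩
  · refine Ideal.mem_sup_left (Ideal.subset_span ⟨_, _, ?_, ?_, rename_val_relElem s a⟩)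
    · exact Finset.disjoint_left.2 fun i hi => by
        obtain ⟨j, -, rfl⟩ := Finset.mem_map.1 hi
        exact j.2
    · simpa [Finset.sum_map, Subtype.val_injective.extend_apply] using hrel
  · exact Ideal.mem_sup_right (Ideal.subset_span ⟨i, by simp⟩)

lemma relElem_mem_map_sup_map {s : Finset ι} {a : ι → ℝ}
    (hrel : ∑ i ∈ s, a i • coordOn V i = 0) :
    relElem s a ∈
      (SResIdeal V F).map (rename Subtype.val) ⊔ (SLocIdeal V F).map (rename Subtype.val) := by
  have hres : relElem (s \ F) a ∈ (SResIdeal V F).map (rename Subtype.val) :=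
    relElem_mem_map_SResIdeal V F Finset.sdiff_disjoint (sum_smul_coordOn_sdiff_eq_zero V F hrel)
  rw [← Finset.sdiff_union_inter s F, relElem_union (Finset.disjoint_sdiff_inter s F)]
  refine add_mem (Ideal.mem_sup_left (Ideal.mul_mem_left _ _ hres)) ?_
  by_cases h0 : ∀ i ∈ s \ F, a i = 0
  · exact Ideal.mem_sup_right (Ideal.mul_mem_left _ _ (relElem_mem_map_SLocIdeal V F
      Finset.inter_subset_right (sum_smul_coordOn_inter_eq_zero V F hrel h0)))
  · push Not at h0
    obtain ⟨t, ht, hat⟩ := h0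
    exact Ideal.mem_sup_left (Ideal.mul_mem_right _ _ (prod_X_mem_of_relElem_mem hres ht hat
      (X_sq_mem_map_SResIdeal V F (Finset.mem_sdiff.1 ht).2)))

theorem JH_sup_JresI_sup_Qall_eq : JH V ⊔ JresI V F ⊔ Qall =
    (SResIdeal V F).map (rename Subtype.val) ⊔ (SLocIdeal V F).map (rename Subtype.val) := by
  refine le_antisymm (sup_le (sup_le ?_ ?_) ?_) (sup_le ?_ ?_)
  · rw [JH, Ideal.span_le]
    rintro _ ⟨s, a, hrel, rfl⟩
    exact relElem_mem_map_sup_map V F hrel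
  · rw [JresI, Ideal.span_le]
    rintro _ ⟨s, a, hs, hrel, rfl⟩
    exact Ideal.mem_sup_left (relElem_mem_map_SResIdeal V F hs hrel)
  · rw [Qall, Ideal.span_le]
    rintro _ ⟨i, rfl⟩
    by_cases hi : i ∈ F
    · exact Ideal.mem_sup_right (X_sq_mem_map_SLocIdeal V F hi)
    · exact Ideal.mem_sup_left (X_sq_mem_map_SResIdeal V F hi)
  · exact (map_SResIdeal_le V F).trans (sup_le_sup_right le_sup_right _)
  · exact (map_SLocIdeal_le V F).trans (sup_le_sup_right le_sup_left _)

end Arrangement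

section TensorProduct

open Algebra.TensorProduct

variable {R : Type*} [CommRing R]

lemma ker_map_mkₐ {A B : Type*} [CommRing A] [CommRing B] [Algebra R A] [Algebra R B]
    (Ia : Ideal A) (Ib : Ideal B) :
    RingHom.ker (map (Ideal.Quotient.mkₐ R Ia) (Ideal.Quotient.mkₐ R Ib)) =
      Ia.map (includeLeft : A →ₐ[R] A ⊗[R] B) ⊔ Ib.map (includeRight : B →ₐ[R] A ⊗[R] B) := by
  rw [map_ker _ _ Ideal.Quotient.mk_surjective Ideal.Quotient.mk_surjective, AlgHom.ker_coe,
    AlgHom.ker_coe, Ideal.Quotient.mkₐ_ker, Ideal.Quotient.mkₐ_ker]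

noncomputable def quotientTensorQuotientEquiv {A B : Type*} [CommRing A] [CommRing B]
    [Algebra R A] [Algebra R B] (Ia : Ideal A) (Ib : Ideal B) :
    ((A ⊗[R] B) ⧸ (Ia.map (includeLeft : A →ₐ[R] A ⊗[R] B) ⊔
      Ib.map (includeRight : B →ₐ[R] A ⊗[R] B))) ≃ₐ[R] (A ⧸ Ia) ⊗[R] (B ⧸ Ib) :=
  (Ideal.quotientEquivAlgOfEq R (ker_map_mkₐ Ia Ib).symm).trans
    (Ideal.quotientKerAlgEquivOfSurjective (map_surjective _ _
      (Ideal.Quotient.mkₐ_surjective R Ia) (Ideal.Quotient.mkₐ_surjective R Ib)))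

variable (R) {ι : Type*} (p : ι → Prop) [DecidablePred p]

noncomputable def tensorSplitEquiv :
    MvPolynomial {i // ¬p i} R ⊗[R] MvPolynomial {i // p i} R ≃ₐ[R] MvPolynomial ι R :=
  (tensorEquivSum R _ _ R).trans (renameEquiv R ((Equiv.sumComm _ _).trans (Equiv.sumCompl p)))

lemma tensorSplitEquiv_comp_includeLeft :
    (tensorSplitEquiv R p).toAlgHom.comp includeLeft = rename Subtype.val := by
  ext i
  simp [tensorSplitEquiv]

lemma tensorSplitEquiv_comp_includeRight :
    (tensorSplitEquiv R p).toAlgHom.comp includeRight = rename Subtype.val := by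
  ext i
  simp [tensorSplitEquiv]

lemma map_tensorSplitEquiv (Ja : Ideal (MvPolynomial {i // ¬p i} R))
    (Jb : Ideal (MvPolynomial {i // p i} R)) :
    (Ja.map (includeLeft : _ →ₐ[R] _ ⊗[R] MvPolynomial {i // p i} R) ⊔
      Jb.map (includeRight : _ →ₐ[R] MvPolynomial {i // ¬p i} R ⊗[R] _)).map
        (tensorSplitEquiv R p).toAlgHom =
      Ja.map (rename Subtype.val) ⊔ Jb.map (rename Subtype.val) := by
  rw [Ideal.map_sup, Ideal.map_mapₐ, Ideal.map_mapₐ, tensorSplitEquiv_comp_includeLeft,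
    tensorSplitEquiv_comp_includeRight]

end TensorProduct

set_option linter.unusedSectionVars false in
theorem stmt16 (V : Submodule ℝ (I → ℝ)) (F : Finset I) :
    Nonempty
      ((MvPolynomial I ℝ ⧸ (JH V ⊔ JresI V F ⊔ Qall)) ≃+*
        ((MvPolynomial {i : I // i ∉ F} ℝ ⧸ SResIdeal V F) ⊗[ℝ]
          (MvPolynomial {i : I // i ∈ F} ℝ ⧸ SLocIdeal V F))) := by
  have hJ := (JH_sup_JresI_sup_Qall_eq V F).trans
    (map_tensorSplitEquiv ℝ (· ∈ F) (SResIdeal V F) (SLocIdeal V F)).symm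
  exact ⟨((Ideal.quotientEquivAlg _ _ (tensorSplitEquiv ℝ (· ∈ F)) hJ).symm.trans
    (quotientTensorQuotientEquiv _ _)).toRingEquiv⟩
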